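/- arXiv:1507.06265 — 7 statements merged into one kernel-verified Lean document; each statement's English description precedes it below -/
import Mathlib

section
/- Let m1, m2 be positive integers, let H1 be a complex polynomial of degree m1 all of whose roots lie in K̃1, let H2 be a complex polynomial of degree m2 all of whose roots lie in K̃2, and set H = H1·H2. Then H(−s) ≠ 0 for every s ∈ K̃, and sup_{s ∈ K̃1} |H(s)/H(−s)| = sup_{s ∈ K̃1} |H1(s)/H1(−s)|, and sup_{s ∈ K̃2} |H(s)/H(−s)| = sup_{s ∈ K̃2} |H2(s)/H2(−s)|. -/
/-- The segment of the positive imaginary axis `{ i·u : u ∈ [√(−b1), √(−a1)] }`. -/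
noncomputable def Kt1 (a1 b1 : ℝ) : Set ℂ :=
  (fun u : ℝ => Complex.I * (u : ℂ)) '' Set.Icc (Real.sqrt (-b1)) (Real.sqrt (-a1))

/-- The segment of the positive real axis `[√(a2), √(b2)]`. -/
noncomputable def Kt2 (a2 b2 : ℝ) : Set ℂ :=
  (fun u : ℝ => (u : ℂ)) '' Set.Icc (Real.sqrt a2) (Real.sqrt b2)

/-!
On `K̃1 ⊆ iℝ` the roots of `H2` are real, and on `K̃2 ⊆ ℝ` the roots of `H1` are purely imaginary.
A purely imaginary `s` and a real `r` satisfy `|s - r| = |s + r|` (both are `√(|s|² + |r|²)`), so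
the other factor has `|Hⱼ(s)| = |Hⱼ(-s)|` and cancels from `|H(s) / H(-s)|`. Finally `H(-s) ≠ 0`
because every root lies in the open upper or the open right half-plane, whereas `-s` lies in the
closed third quadrant.
-/

open Polynomial

theorem Polynomial.Splits.norm_eval_eq_of_forall_mem_roots {K : Type*} [NormedField K]
    {f : K[X]} (hf : f.Splits) {z w : K} (h : ∀ r ∈ f.roots, ‖z - r‖ = ‖w - r‖) :
    ‖f.eval z‖ = ‖f.eval w‖ := by
  have norm_eval (x : K) : ‖f.eval x‖ = ‖f.leadingCoeff‖ * (f.roots.map (‖x - ·‖)).prod := by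
    rw [hf.eval_eq_prod_roots, norm_mul, ← normHom_apply (_ : Multiset K).prod, map_multiset_prod,
      Multiset.map_map]
    rfl
  rw [norm_eval, norm_eval, Multiset.map_congr rfl h]

namespace Complex

theorem norm_sub_eq_norm_add_of_re_eq_zero_of_im_eq_zero {z r : ℂ} (hz : z.re = 0)
    (hr : r.im = 0) : ‖z - r‖ = ‖z + r‖ := by
  simp only [norm_eq_sqrt_sq_add_sq, sub_re, sub_im, add_re, add_im, hz, hr]
  ring_nf

theorem norm_eval_neg_eq_of_re_eq_zero {f : ℂ[X]} (hf : ∀ r, f.IsRoot r → r.im = 0) {s : ℂ}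
    (hs : s.re = 0) : ‖f.eval s‖ = ‖f.eval (-s)‖ :=
  (IsAlgClosed.splits f).norm_eval_eq_of_forall_mem_roots fun r hr => by
    rw [norm_sub_eq_norm_add_of_re_eq_zero_of_im_eq_zero hs (hf r (isRoot_of_mem_roots hr)),
      ← norm_neg, neg_add']

theorem norm_eval_neg_eq_of_im_eq_zero {f : ℂ[X]} (hf : ∀ r, f.IsRoot r → r.re = 0) {s : ℂ}
    (hs : s.im = 0) : ‖f.eval s‖ = ‖f.eval (-s)‖ :=
  (IsAlgClosed.splits f).norm_eval_eq_of_forall_mem_roots fun r hr => by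
    rw [norm_sub_rev, norm_sub_eq_norm_add_of_re_eq_zero_of_im_eq_zero
      (hf r (isRoot_of_mem_roots hr)) hs, ← norm_neg, neg_add, sub_eq_neg_add]

theorem eval_neg_ne_zero_of_im_pos {f : ℂ[X]} (hf : ∀ r, f.IsRoot r → 0 < r.im) {s : ℂ}
    (hs : 0 ≤ s.im) : f.eval (-s) ≠ 0 := fun h => by
  have := hf _ h
  rw [neg_im] at this
  linarith

theorem eval_neg_ne_zero_of_re_pos {f : ℂ[X]} (hf : ∀ r, f.IsRoot r → 0 < r.re) {s : ℂ}
    (hs : 0 ≤ s.re) : f.eval (-s) ≠ 0 := fun h => by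
  have := hf _ h
  rw [neg_re] at this
  linarith

end Complex

theorem sSup_image_norm_div_eval_mul_eq {f g : ℂ[X]} {S : Set ℂ}
    (hg : ∀ s ∈ S, ‖g.eval s‖ = ‖g.eval (-s)‖) (hg0 : ∀ s ∈ S, g.eval (-s) ≠ 0) :
    sSup ((fun s => ‖(f * g).eval s / (f * g).eval (-s)‖) '' S) =
      sSup ((fun s => ‖f.eval s / f.eval (-s)‖) '' S) := by
  refine congrArg sSup (Set.image_congr fun s hs => ?_)
  rw [eval_mul, eval_mul, norm_div, norm_div, norm_mul, norm_mul, hg s hs,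
    mul_div_mul_right _ _ (norm_ne_zero_iff.2 (hg0 s hs))]

section Segments

variable {a1 b1 a2 b2 : ℝ} {z : ℂ}

theorem re_eq_zero_of_mem_Kt1 (hz : z ∈ Kt1 a1 b1) : z.re = 0 := by
  obtain ⟨u, -, rfl⟩ := hz
  simp

theorem im_pos_of_mem_Kt1 (hb1 : b1 < 0) (hz : z ∈ Kt1 a1 b1) : 0 < z.im := by
  obtain ⟨u, hu, rfl⟩ := hz
  simpa using (Real.sqrt_pos.2 (neg_pos.2 hb1)).trans_le hu.1

theorem im_eq_zero_of_mem_Kt2 (hz : z ∈ Kt2 a2 b2) : z.im = 0 := by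
  obtain ⟨u, -, rfl⟩ := hz
  simp

theorem re_pos_of_mem_Kt2 (ha2 : 0 < a2) (hz : z ∈ Kt2 a2 b2) : 0 < z.re := by
  obtain ⟨u, hu, rfl⟩ := hz
  simpa using (Real.sqrt_pos.2 ha2).trans_le hu.1

theorem re_nonneg_and_im_nonneg_of_mem_Kt1_union_Kt2 (hz : z ∈ Kt1 a1 b1 ∪ Kt2 a2 b2) :
    0 ≤ z.re ∧ 0 ≤ z.im := by
  rcases hz with ⟨u, hu, rfl⟩ | ⟨u, hu, rfl⟩
  · simpa using (Real.sqrt_nonneg _).trans hu.1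
  · simpa using (Real.sqrt_nonneg _).trans hu.1

end Segments

theorem stmt0_general (a1 b1 a2 b2 : ℝ) (hb1 : b1 < 0) (ha2 : 0 < a2)
    (H1 H2 : Polynomial ℂ)
    (hr1 : ∀ z : ℂ, H1.IsRoot z → z ∈ Kt1 a1 b1)
    (hr2 : ∀ z : ℂ, H2.IsRoot z → z ∈ Kt2 a2 b2) :
    (∀ s ∈ Kt1 a1 b1 ∪ Kt2 a2 b2, (H1 * H2).eval (-s) ≠ 0) ∧
    sSup ((fun s : ℂ => ‖(H1 * H2).eval s / (H1 * H2).eval (-s)‖) '' Kt1 a1 b1) =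
      sSup ((fun s : ℂ => ‖H1.eval s / H1.eval (-s)‖) '' Kt1 a1 b1) ∧
    sSup ((fun s : ℂ => ‖(H1 * H2).eval s / (H1 * H2).eval (-s)‖) '' Kt2 a2 b2) =
      sSup ((fun s : ℂ => ‖H2.eval s / H2.eval (-s)‖) '' Kt2 a2 b2) := by
  have hH1 (s) (hs : s ∈ Kt1 a1 b1 ∪ Kt2 a2 b2) : H1.eval (-s) ≠ 0 :=
    Complex.eval_neg_ne_zero_of_im_pos (fun r hr => im_pos_of_mem_Kt1 hb1 (hr1 r hr))
      (re_nonneg_and_im_nonneg_of_mem_Kt1_union_Kt2 hs).2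
  have hH2 (s) (hs : s ∈ Kt1 a1 b1 ∪ Kt2 a2 b2) : H2.eval (-s) ≠ 0 :=
    Complex.eval_neg_ne_zero_of_re_pos (fun r hr => re_pos_of_mem_Kt2 ha2 (hr2 r hr))
      (re_nonneg_and_im_nonneg_of_mem_Kt1_union_Kt2 hs).1
  refine ⟨fun s hs => by simpa using mul_ne_zero (hH1 s hs) (hH2 s hs), ?_, ?_⟩
  · exact sSup_image_norm_div_eval_mul_eq
      (fun s hs => Complex.norm_eval_neg_eq_of_re_eq_zero
        (fun r hr => im_eq_zero_of_mem_Kt2 (hr2 r hr)) (re_eq_zero_of_mem_Kt1 hs))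
      (fun s hs => hH2 s (Or.inl hs))
  · rw [mul_comm H1 H2]
    exact sSup_image_norm_div_eval_mul_eq
      (fun s hs => Complex.norm_eval_neg_eq_of_im_eq_zero
        (fun r hr => re_eq_zero_of_mem_Kt1 (hr1 r hr)) (im_eq_zero_of_mem_Kt2 hs))
      (fun s hs => hH1 s (Or.inr hs))

theorem stmt0 (a1 b1 a2 b2 : ℝ) (hab1 : a1 < b1) (hb1 : b1 < 0) (ha2 : 0 < a2)
    (hab2 : a2 < b2) (m1 m2 : ℕ) (hm1 : 0 < m1) (hm2 : 0 < m2) (H1 H2 : Polynomial ℂ)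
    (hd1 : H1.degree = m1) (hd2 : H2.degree = m2)
    (hr1 : ∀ z : ℂ, H1.IsRoot z → z ∈ Kt1 a1 b1)
    (hr2 : ∀ z : ℂ, H2.IsRoot z → z ∈ Kt2 a2 b2) :
    (∀ s ∈ Kt1 a1 b1 ∪ Kt2 a2 b2, (H1 * H2).eval (-s) ≠ 0) ∧
    sSup ((fun s : ℂ => ‖(H1 * H2).eval s / (H1 * H2).eval (-s)‖) '' Kt1 a1 b1) =
      sSup ((fun s : ℂ => ‖H1.eval s / H1.eval (-s)‖) '' Kt1 a1 b1) ∧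
    sSup ((fun s : ℂ => ‖(H1 * H2).eval s / (H1 * H2).eval (-s)‖) '' Kt2 a2 b2) =
      sSup ((fun s : ℂ => ‖H2.eval s / H2.eval (-s)‖) '' Kt2 a2 b2) :=
  stmt0_general a1 b1 a2 b2 hb1 ha2 H1 H2 hr1 hr2
end

section
/- Let m1, m2 be positive integers. Suppose Z1 is a monic polynomial of degree m1 with real coefficients, all roots of Z1 lie in the open interval (√(−b1), √(−a1)), and sup_{u ∈ [√(−b1),√(−a1)]} |Z1(u)/Z1(−u)| = E_{m1}^{(√(−b1),√(−a1))}; suppose Z2 is a monic polynomial of degree m2 with real coefficients, all roots of Z2 lie in (√(a2), √(b2)), and sup_{u ∈ [√(a2),√(b2)]} |Z2(u)/Z2(−u)| = E_{m2}^{(√(a2),√(b2))}. Define H(s) = Z1(−i s)·Z2(s). Then H(−s) ≠ 0 for every s ∈ K̃ and sup_{s ∈ K̃} |H(s)/H(−s)| = max{ E_{m1}^{(√(−b1),√(−a1))}, E_{m2}^{(√(a2),√(b2))} }. -/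
/-- The Zolotarev value `E_m^{(c,d)}`: the infimum over monic real polynomials `Z` of
degree `m` of `sup_{u ∈ [c,d]} |Z(u)/Z(−u)|`. -/
noncomputable def zolE (c d : ℝ) (m : ℕ) : ℝ :=
  sInf { e : ℝ | ∃ Z : Polynomial ℝ, Z.Monic ∧ Z.natDegree = m ∧
    e = sSup ((fun u : ℝ => |Z.eval u / Z.eval (-u)|) '' Set.Icc c d) }

/-!
On `K̃₁`, with `s = i u`, the factor `Z₁(-i s)` of `H` becomes `Z₁(u)` and `H(s) / H(-s)` is
`Z₁(u) / Z₁(-u)` times `Z₂(i u) / Z₂(-i u)`; the latter has modulus one because `Z₂` has real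
coefficients and `-i u` is the conjugate of `i u`. Symmetrically, on `K̃₂` the ratio has the modulus
of `Z₂(u) / Z₂(-u)`. All roots of `Z₁` and `Z₂` are positive reals, so no denominator vanishes, and
the supremum over `K̃₁ ∪ K̃₂` of these nonnegative quantities is the larger of the two suprema.
-/

open Polynomial Complex Set ComplexConjugate

theorem Real.sSup_union_of_nonneg {s t : Set ℝ} (hs : BddAbove s) (ht : BddAbove t)
    (hs0 : ∀ x ∈ s, 0 ≤ x) (ht0 : ∀ x ∈ t, 0 ≤ x) :
    sSup (s ∪ t) = max (sSup s) (sSup t) := by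
  rcases s.eq_empty_or_nonempty with rfl | hs_ne
  · rw [empty_union, Real.sSup_empty, max_eq_right (Real.sSup_nonneg ht0)]
  rcases t.eq_empty_or_nonempty with rfl | ht_ne
  · rw [union_empty, Real.sSup_empty, max_eq_left (Real.sSup_nonneg hs0)]
  exact csSup_union hs hs_ne ht ht_ne

namespace Polynomial

theorem aeval_ofReal_complex (P : ℝ[X]) (x : ℝ) : aeval (x : ℂ) P = P.eval x :=
  aeval_algebraMap_apply_eq_algebraMap_eval x P

variable {P : ℝ[X]}

def AllRootsPosReal (P : ℝ[X]) : Prop :=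
  ∀ z : ℂ, aeval z P = 0 → ∃ x : ℝ, 0 < x ∧ z = x

theorem allRootsPosReal_of_roots_Ioo {c d : ℝ} (hc : 0 ≤ c)
    (hP : ∀ z : ℂ, aeval z P = 0 → ∃ x ∈ Ioo c d, z = (x : ℂ)) : P.AllRootsPosReal := by
  intro z hz
  obtain ⟨x, hx, rfl⟩ := hP z hz
  exact ⟨x, hc.trans_lt hx.1, rfl⟩

variable (hP : P.AllRootsPosReal)
include hP

theorem aeval_I_mul_ne_zero (u : ℝ) : aeval (I * u) P ≠ 0 := by
  intro h
  obtain ⟨x, hx, hxu⟩ := hP _ h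
  have hre := congrArg re hxu
  have him := congrArg im hxu
  simp only [mul_re, mul_im, I_re, I_im, ofReal_re, ofReal_im] at hre him
  linarith

theorem eval_neg_ne_zero {u : ℝ} (hu : 0 ≤ u) : P.eval (-u) ≠ 0 := by
  intro h
  obtain ⟨x, hx, hxu⟩ := hP (-u : ℝ) (by rw [aeval_ofReal_complex, h, ofReal_zero])
  have := ofReal_injective hxu
  linarith

theorem bddAbove_image_abs_eval_div_eval_neg {c d : ℝ} (hc : 0 ≤ c) :
    BddAbove ((fun u : ℝ => |P.eval u / P.eval (-u)|) '' Icc c d) := by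
  refine (isCompact_Icc.image_of_continuousOn ?_).bddAbove
  exact ((P.continuous.continuousOn).div (P.continuous.comp continuous_neg).continuousOn
    fun u hu => eval_neg_ne_zero hP (hc.trans hu.1)).abs

end Polynomial

section ConjFactor

variable (a b : ℂ) {Q : ℝ[X]} {z : ℂ} (hz : aeval z Q ≠ 0)
include hz

theorem norm_mul_aeval_div_mul_aeval_conj :
    ‖a * aeval z Q / (b * aeval (conj z) Q)‖ = ‖a / b‖ := by
  rw [aeval_conj, norm_div, norm_mul, norm_mul, norm_conj,
    mul_div_mul_right _ _ (norm_ne_zero_iff.mpr hz), norm_div]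

theorem norm_mul_aeval_conj_div_mul_aeval :
    ‖a * aeval (conj z) Q / (b * aeval z Q)‖ = ‖a / b‖ := by
  rw [aeval_conj, norm_div, norm_mul, norm_mul, norm_conj,
    mul_div_mul_right _ _ (norm_ne_zero_iff.mpr hz), norm_div]

end ConjFactor

noncomputable def zolotarevProduct (Z1 Z2 : ℝ[X]) (s : ℂ) : ℂ :=
  aeval (-(I * s)) Z1 * aeval s Z2

namespace zolotarevProduct

variable (Z1 Z2 : ℝ[X]) (u : ℝ)

theorem apply_I_mul : zolotarevProduct Z1 Z2 (I * u) = Z1.eval u * aeval (I * u) Z2 := by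
  rw [zolotarevProduct, ← mul_assoc, I_mul_I, neg_one_mul, neg_neg,
    aeval_ofReal_complex]

theorem apply_neg_I_mul :
    zolotarevProduct Z1 Z2 (-(I * u)) = Z1.eval (-u) * aeval (conj (I * u)) Z2 := by
  rw [zolotarevProduct, mul_neg, neg_neg, ← mul_assoc, I_mul_I, neg_one_mul, ← ofReal_neg,
    aeval_ofReal_complex, map_mul, conj_I, conj_ofReal, neg_mul]

theorem apply_ofReal : zolotarevProduct Z1 Z2 u = aeval (conj (I * u)) Z1 * Z2.eval u := by
  rw [zolotarevProduct, map_mul, conj_I, conj_ofReal, neg_mul, aeval_ofReal_complex]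

theorem apply_neg_ofReal :
    zolotarevProduct Z1 Z2 (-u) = aeval (I * u) Z1 * Z2.eval (-u) := by
  rw [zolotarevProduct, mul_neg, neg_neg, ← ofReal_neg, aeval_ofReal_complex]

variable {Z1 Z2 u}

theorem norm_div_apply_neg_I_mul (hZ2 : aeval (I * u) Z2 ≠ 0) :
    ‖zolotarevProduct Z1 Z2 (I * u) / zolotarevProduct Z1 Z2 (-(I * u))‖ =
      |Z1.eval u / Z1.eval (-u)| := by
  rw [apply_I_mul, apply_neg_I_mul, norm_mul_aeval_div_mul_aeval_conj _ _ hZ2, ← ofReal_div,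
    norm_real, Real.norm_eq_abs]

theorem norm_div_apply_neg_ofReal (hZ1 : aeval (I * u) Z1 ≠ 0) :
    ‖zolotarevProduct Z1 Z2 u / zolotarevProduct Z1 Z2 (-u)‖ =
      |Z2.eval u / Z2.eval (-u)| := by
  rw [apply_ofReal, apply_neg_ofReal, mul_comm, mul_comm (aeval (I * u) Z1),
    norm_mul_aeval_conj_div_mul_aeval _ _ hZ1, ← ofReal_div, norm_real,
    Real.norm_eq_abs]

variable {a1 b1 a2 b2 : ℝ}

theorem apply_neg_ne_zero_of_mem_Kt1 (hZ1 : Z1.AllRootsPosReal) (hZ2 : Z2.AllRootsPosReal)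
    {s : ℂ} (hs : s ∈ Kt1 a1 b1) : zolotarevProduct Z1 Z2 (-s) ≠ 0 := by
  obtain ⟨u, hu, rfl⟩ := hs
  rw [apply_neg_I_mul, aeval_conj]
  exact mul_ne_zero (ofReal_ne_zero.mpr (eval_neg_ne_zero hZ1 ((Real.sqrt_nonneg _).trans hu.1)))
    ((_root_.map_ne_zero _).mpr (aeval_I_mul_ne_zero hZ2 u))

theorem apply_neg_ne_zero_of_mem_Kt2 (hZ1 : Z1.AllRootsPosReal) (hZ2 : Z2.AllRootsPosReal)
    {s : ℂ} (hs : s ∈ Kt2 a2 b2) : zolotarevProduct Z1 Z2 (-s) ≠ 0 := by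
  obtain ⟨u, hu, rfl⟩ := hs
  rw [apply_neg_ofReal]
  exact mul_ne_zero (aeval_I_mul_ne_zero hZ1 u)
    (ofReal_ne_zero.mpr (eval_neg_ne_zero hZ2 ((Real.sqrt_nonneg _).trans hu.1)))

theorem image_norm_div_Kt1 (hZ2 : Z2.AllRootsPosReal) :
    (fun s => ‖zolotarevProduct Z1 Z2 s / zolotarevProduct Z1 Z2 (-s)‖) '' Kt1 a1 b1 =
      (fun u => |Z1.eval u / Z1.eval (-u)|) '' Icc (Real.sqrt (-b1)) (Real.sqrt (-a1)) := by
  rw [Kt1, image_image]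
  exact image_congr fun u _ => norm_div_apply_neg_I_mul (aeval_I_mul_ne_zero hZ2 u)

theorem image_norm_div_Kt2 (hZ1 : Z1.AllRootsPosReal) :
    (fun s => ‖zolotarevProduct Z1 Z2 s / zolotarevProduct Z1 Z2 (-s)‖) '' Kt2 a2 b2 =
      (fun u => |Z2.eval u / Z2.eval (-u)|) '' Icc (Real.sqrt a2) (Real.sqrt b2) := by
  rw [Kt2, image_image]
  exact image_congr fun u _ => norm_div_apply_neg_ofReal (aeval_I_mul_ne_zero hZ1 u)

end zolotarevProduct

theorem stmt1_general (a1 b1 a2 b2 : ℝ) (m1 m2 : ℕ) (Z1 Z2 : Polynomial ℝ)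
    (hZ1roots : ∀ z : ℂ, Polynomial.aeval z Z1 = 0 →
      ∃ x ∈ Set.Ioo (Real.sqrt (-b1)) (Real.sqrt (-a1)), z = (x : ℂ))
    (hZ1opt : sSup ((fun u : ℝ => |Z1.eval u / Z1.eval (-u)|) ''
        Set.Icc (Real.sqrt (-b1)) (Real.sqrt (-a1))) =
      zolE (Real.sqrt (-b1)) (Real.sqrt (-a1)) m1)
    (hZ2roots : ∀ z : ℂ, Polynomial.aeval z Z2 = 0 →
      ∃ x ∈ Set.Ioo (Real.sqrt a2) (Real.sqrt b2), z = (x : ℂ))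
    (hZ2opt : sSup ((fun u : ℝ => |Z2.eval u / Z2.eval (-u)|) ''
        Set.Icc (Real.sqrt a2) (Real.sqrt b2)) =
      zolE (Real.sqrt a2) (Real.sqrt b2) m2)
    (H : ℂ → ℂ)
    (hH : ∀ s : ℂ, H s = (Z1.map (algebraMap ℝ ℂ)).eval (-(Complex.I * s)) *
      (Z2.map (algebraMap ℝ ℂ)).eval s) :
    (∀ s ∈ Kt1 a1 b1 ∪ Kt2 a2 b2, H (-s) ≠ 0) ∧
    sSup ((fun s : ℂ => ‖H s / H (-s)‖) '' (Kt1 a1 b1 ∪ Kt2 a2 b2)) =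
      max (zolE (Real.sqrt (-b1)) (Real.sqrt (-a1)) m1)
        (zolE (Real.sqrt a2) (Real.sqrt b2) m2) := by
  have hZ1 := allRootsPosReal_of_roots_Ioo (Real.sqrt_nonneg _) hZ1roots
  have hZ2 := allRootsPosReal_of_roots_Ioo (Real.sqrt_nonneg _) hZ2roots
  obtain rfl : H = zolotarevProduct Z1 Z2 :=
    funext fun s => by rw [hH, zolotarevProduct, eval_map_algebraMap, eval_map_algebraMap]
  refine ⟨fun s hs => hs.elim (zolotarevProduct.apply_neg_ne_zero_of_mem_Kt1 hZ1 hZ2)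
    (zolotarevProduct.apply_neg_ne_zero_of_mem_Kt2 hZ1 hZ2), ?_⟩
  have habs_nonneg {t : Set ℝ} {P : ℝ[X]} :
      ∀ x ∈ (fun u => |P.eval u / P.eval (-u)|) '' t, 0 ≤ x := by
    rintro _ ⟨u, _, rfl⟩
    exact abs_nonneg _
  rw [image_union, zolotarevProduct.image_norm_div_Kt1 hZ2,
    zolotarevProduct.image_norm_div_Kt2 hZ1,
    Real.sSup_union_of_nonneg (bddAbove_image_abs_eval_div_eval_neg hZ1 (Real.sqrt_nonneg _))
      (bddAbove_image_abs_eval_div_eval_neg hZ2 (Real.sqrt_nonneg _)) habs_nonneg habs_nonneg,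
    hZ1opt, hZ2opt]

theorem stmt1 (a1 b1 a2 b2 : ℝ) (hab1 : a1 < b1) (hb1 : b1 < 0) (ha2 : 0 < a2)
    (hab2 : a2 < b2) (m1 m2 : ℕ) (hm1 : 0 < m1) (hm2 : 0 < m2) (Z1 Z2 : Polynomial ℝ)
    (hZ1monic : Z1.Monic) (hZ1deg : Z1.natDegree = m1)
    (hZ1roots : ∀ z : ℂ, Polynomial.aeval z Z1 = 0 →
      ∃ x ∈ Set.Ioo (Real.sqrt (-b1)) (Real.sqrt (-a1)), z = (x : ℂ))
    (hZ1opt : sSup ((fun u : ℝ => |Z1.eval u / Z1.eval (-u)|) ''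
        Set.Icc (Real.sqrt (-b1)) (Real.sqrt (-a1))) =
      zolE (Real.sqrt (-b1)) (Real.sqrt (-a1)) m1)
    (hZ2monic : Z2.Monic) (hZ2deg : Z2.natDegree = m2)
    (hZ2roots : ∀ z : ℂ, Polynomial.aeval z Z2 = 0 →
      ∃ x ∈ Set.Ioo (Real.sqrt a2) (Real.sqrt b2), z = (x : ℂ))
    (hZ2opt : sSup ((fun u : ℝ => |Z2.eval u / Z2.eval (-u)|) ''
        Set.Icc (Real.sqrt a2) (Real.sqrt b2)) =
      zolE (Real.sqrt a2) (Real.sqrt b2) m2)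
    (H : ℂ → ℂ)
    (hH : ∀ s : ℂ, H s = (Z1.map (algebraMap ℝ ℂ)).eval (-(Complex.I * s)) *
      (Z2.map (algebraMap ℝ ℂ)).eval s) :
    (∀ s ∈ Kt1 a1 b1 ∪ Kt2 a2 b2, H (-s) ≠ 0) ∧
    sSup ((fun s : ℂ => ‖H s / H (-s)‖) '' (Kt1 a1 b1 ∪ Kt2 a2 b2)) =
      max (zolE (Real.sqrt (-b1)) (Real.sqrt (-a1)) m1)
        (zolE (Real.sqrt a2) (Real.sqrt b2) m2) :=
  stmt1_general a1 b1 a2 b2 m1 m2 Z1 Z2 hZ1roots hZ1opt hZ2roots hZ2opt H hH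
end

section
/- Let n ≥ 1 and let m1, m2 be positive integers with m1 + m2 = 2n. Let Z1 be a monic polynomial of degree m1 with real coefficients and all roots in [√(−b1), √(−a1)], and let Z2 be a monic polynomial of degree m2 with real coefficients and all roots in [√(a2), √(b2)]. Set ε1 = sup_{u ∈ [√(−b1),√(−a1)]} |Z1(u)/Z1(−u)|, ε2 = sup_{u ∈ [√(a2),√(b2)]} |Z2(u)/Z2(−u)|, and ε = max{ε1, ε2}, and define H(s) = Z1(−i s)·Z2(s). Let P, Q be the unique complex polynomials with deg P ≤ n−1, deg Q ≤ n and H(s) = −s·P(s²) + Q(s²) for all s. If ε < 1, then for every z ∈ K one has Q(z) ≠ 0 and |P(z)/(Q(z)·F(z)) − 1| ≤ 2ε/(1−ε). -/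
/-- The limiting-absorption branch of the inverse square root on the nonzero reals:
`F(z) = z^{−1/2}` for `z > 0` and `F(z) = −i·(−z)^{−1/2}` for `z < 0`. -/
noncomputable def Fbranch (z : ℝ) : ℂ :=
  if 0 < z then ((Real.sqrt z : ℂ))⁻¹ else -Complex.I * ((Real.sqrt (-z) : ℂ))⁻¹

/-!
Write `z = s²` with `F(z) = s⁻¹`, i.e. `s = √z` on the positive interval and `s = i√(-z)` on the
negative one. Splitting `H(±s) = ∓s·P(z) + Q(z)` gives `Q(z) = (H(s) + H(-s))/2` and
`P(z)/(Q(z)F(z)) - 1 = -H(s)/Q(z)`, so everything follows from `|H(s)| ≤ ε·|H(-s)| ≠ 0`.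
In `H(s) = Z₁(-is)Z₂(s)` one factor is evaluated at the real point `u = |s|`, where
`|Z(u)| ≤ ε|Z(-u)|` by definition of `ε`; the other factor is evaluated at `∓iu`, and its modulus
is the same at `s` and `-s` because a real polynomial commutes with conjugation.
-/

open Polynomial Complex ComplexConjugate Set

theorem ne_zero_and_norm_sub_div_le_of_norm_sub_le {𝕜 : Type*} [NormedDivisionRing 𝕜]
    {a b : 𝕜} {ε : ℝ} (hε : ε < 1) (hab : a + b ≠ 0) (h : ‖b - a‖ ≤ ε * ‖a + b‖) :
    b ≠ 0 ∧ ‖(a - b) / b‖ ≤ 2 * ε / (1 - ε) := by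
  have hpos : 0 < ‖a + b‖ := norm_pos_iff.2 hab
  have hε0 : 0 ≤ ε := nonneg_of_mul_nonneg_left ((norm_nonneg _).trans h) hpos
  have hb : (1 - ε) * ‖a + b‖ ≤ 2 * ‖b‖ := by
    have : ‖a + b‖ ≤ (‖b‖ + ‖b‖) + ε * ‖a + b‖ :=
      calc ‖a + b‖ = ‖(b + b) - (b - a)‖ := by congr 1; abel
        _ ≤ ‖b + b‖ + ‖b - a‖ := norm_sub_le _ _
        _ ≤ (‖b‖ + ‖b‖) + ε * ‖a + b‖ := add_le_add (norm_add_le _ _) h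
    linarith
  have hbpos : 0 < ‖b‖ := by nlinarith
  refine ⟨norm_pos_iff.1 hbpos, ?_⟩
  rw [norm_div, norm_sub_rev, div_le_div_iff₀ hbpos (by linarith)]
  nlinarith [norm_nonneg (b - a)]

theorem eval_sq_ne_zero_and_norm_div_sub_one_le {𝕜 : Type*} [NormedField 𝕜] {P Q : 𝕜[X]}
    {H : 𝕜 → 𝕜} (hH : ∀ s, H s = -s * P.eval (s ^ 2) + Q.eval (s ^ 2)) {s : 𝕜} {ε : ℝ}
    (hε : ε < 1) (hne : H (-s) ≠ 0) (hle : ‖H s‖ ≤ ε * ‖H (-s)‖) :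
    Q.eval (s ^ 2) ≠ 0 ∧ ‖P.eval (s ^ 2) / (Q.eval (s ^ 2) * s⁻¹) - 1‖ ≤ 2 * ε / (1 - ε) := by
  have hplus : H (-s) = s * P.eval (s ^ 2) + Q.eval (s ^ 2) := by rw [hH, neg_sq, neg_neg]
  have hminus : H s = Q.eval (s ^ 2) - s * P.eval (s ^ 2) := by rw [hH]; ring
  rw [hplus] at hne hle
  rw [hminus] at hle
  obtain ⟨hQ, hbound⟩ := ne_zero_and_norm_sub_div_le_of_norm_sub_le hε hne hle
  refine ⟨hQ, le_of_eq_of_le ?_ hbound⟩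
  congr 1
  field_simp

section RealPolynomial

variable {Z : ℝ[X]} {S : Set ℝ}

theorem aeval_ne_zero_of_forall_ne (hZ : ∀ z : ℂ, aeval z Z = 0 → ∃ x ∈ S, z = x) {w : ℂ}
    (hw : ∀ x ∈ S, w ≠ x) : aeval w Z ≠ 0 := fun h0 =>
  let ⟨x, hx, hwx⟩ := hZ w h0
  hw x hx hwx

theorem eval_ne_zero_of_notMem (hZ : ∀ z : ℂ, aeval z Z = 0 → ∃ x ∈ S, z = x) {x : ℝ}
    (hx : x ∉ S) : Z.eval x ≠ 0 := by
  intro h0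
  refine aeval_ne_zero_of_forall_ne hZ (w := x) (fun y hy h => hx (ofReal_injective h ▸ hy)) ?_
  rw [show aeval (x : ℂ) Z = Z.eval x from aeval_ofReal Z x, h0, ofReal_zero]

theorem aeval_ne_zero_of_im_ne_zero (hZ : ∀ z : ℂ, aeval z Z = 0 → ∃ x ∈ S, z = x) {w : ℂ}
    (hw : w.im ≠ 0) : aeval w Z ≠ 0 :=
  aeval_ne_zero_of_forall_ne hZ fun x _ h => hw (h ▸ ofReal_im x)

theorem norm_aeval_conj (Z : ℝ[X]) (w : ℂ) : ‖aeval (conj w) Z‖ = ‖aeval w Z‖ := by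
  rw [aeval_conj, norm_conj]

theorem abs_eval_le_sSup_mul (hS : IsCompact S) (hZ : ∀ u ∈ S, Z.eval (-u) ≠ 0) {u : ℝ}
    (hu : u ∈ S) :
    |Z.eval u| ≤ sSup ((fun u : ℝ => |Z.eval u / Z.eval (-u)|) '' S) * |Z.eval (-u)| := by
  have hcont : ContinuousOn (fun u : ℝ => |Z.eval u / Z.eval (-u)|) S :=
    (Z.continuousOn.div (Z.continuous.comp continuous_neg).continuousOn hZ).abs
  have := le_csSup (hS.image_of_continuousOn hcont).bddAbove (mem_image_of_mem _ hu)
  rwa [abs_div, div_le_iff₀ (abs_pos.2 (hZ u hu))] at this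

theorem norm_aeval_mul_aeval_conj_le {X Y : ℝ[X]} {l r ε : ℝ} (hl : 0 < l)
    (hX : ∀ z : ℂ, aeval z X = 0 → ∃ x ∈ Icc l r, z = x)
    (hY : ∀ z : ℂ, aeval z Y = 0 → ∃ x ∈ S, z = x)
    (hXε : sSup ((fun u : ℝ => |X.eval u / X.eval (-u)|) '' Icc l r) ≤ ε)
    {u : ℝ} (hu : u ∈ Icc l r) {w : ℂ} (hw : w.im ≠ 0) :
    aeval ((-u : ℝ) : ℂ) X * aeval w Y ≠ 0 ∧
      ‖aeval (u : ℂ) X * aeval (conj w) Y‖ ≤ ε * ‖aeval ((-u : ℝ) : ℂ) X * aeval w Y‖ := by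
  have hneg : ∀ v ∈ Icc l r, X.eval (-v) ≠ 0 := fun v hv =>
    eval_ne_zero_of_notMem hX fun h => by linarith [h.1, hv.1]
  have hXu : |X.eval u| ≤ ε * |X.eval (-u)| :=
    (abs_eval_le_sSup_mul isCompact_Icc hneg hu).trans
      (mul_le_mul_of_nonneg_right hXε (abs_nonneg _))
  have hreal : ∀ v : ℝ, aeval (v : ℂ) X = X.eval v := aeval_ofReal X
  rw [hreal, hreal]
  refine ⟨mul_ne_zero (ofReal_ne_zero.2 (hneg u hu)) (aeval_ne_zero_of_im_ne_zero hY hw), ?_⟩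
  simp only [norm_mul, norm_aeval_conj, norm_real, Real.norm_eq_abs]
  rw [← mul_assoc]
  exact mul_le_mul_of_nonneg_right hXu (norm_nonneg _)

end RealPolynomial

/-- The function `H` of the statement. -/
noncomputable def rotatedProduct (Z1 Z2 : ℝ[X]) (s : ℂ) : ℂ :=
  aeval (-(I * s)) Z1 * aeval s Z2

theorem exists_sqrt_of_mem_Icc_of_neg {Z1 Z2 : ℝ[X]} {S : Set ℝ} {a b ε : ℝ} (hb : b < 0)
    (hZ1 : ∀ z : ℂ, aeval z Z1 = 0 → ∃ x ∈ Icc √(-b) √(-a), z = x)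
    (hZ2 : ∀ z : ℂ, aeval z Z2 = 0 → ∃ x ∈ S, z = x)
    (hε : sSup ((fun u : ℝ => |Z1.eval u / Z1.eval (-u)|) '' Icc √(-b) √(-a)) ≤ ε)
    {z : ℝ} (hz : z ∈ Icc a b) :
    ∃ s : ℂ, s ^ 2 = z ∧ Fbranch z = s⁻¹ ∧ rotatedProduct Z1 Z2 (-s) ≠ 0 ∧
      ‖rotatedProduct Z1 Z2 s‖ ≤ ε * ‖rotatedProduct Z1 Z2 (-s)‖ := by
  have hz0 : z < 0 := hz.2.trans_lt hb
  set u := √(-z)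
  have hu0 : 0 < u := Real.sqrt_pos.2 (neg_pos.2 hz0)
  have hu : u ∈ Icc √(-b) √(-a) :=
    ⟨Real.sqrt_le_sqrt (by linarith [hz.2]), Real.sqrt_le_sqrt (by linarith [hz.1])⟩
  obtain ⟨hne, hle⟩ := norm_aeval_mul_aeval_conj_le (Real.sqrt_pos.2 (neg_pos.2 hb)) hZ1 hZ2
    hε hu (w := -(I * u)) (by simp [hu0.ne'])
  have hplus : rotatedProduct Z1 Z2 (I * u) = aeval (u : ℂ) Z1 * aeval (conj (-(I * u))) Z2 := by
    have harg : -(I * (I * u)) = u := by linear_combination (-(u : ℂ)) * I_sq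
    simp only [rotatedProduct, harg, map_neg, map_mul, conj_I, conj_ofReal, neg_mul, neg_neg]
  have hminus : rotatedProduct Z1 Z2 (-(I * u)) =
      aeval ((-u : ℝ) : ℂ) Z1 * aeval (-(I * u)) Z2 := by
    have harg : -(I * -(I * u)) = ((-u : ℝ) : ℂ) := by
      push_cast
      linear_combination (u : ℂ) * I_sq
    rw [rotatedProduct, harg]
  refine ⟨I * u, ?_, ?_, hminus ▸ hne, hplus ▸ hminus ▸ hle⟩
  · rw [mul_pow, I_sq, ← ofReal_pow, Real.sq_sqrt (neg_nonneg.2 hz0.le)]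
    push_cast
    ring
  · rw [Fbranch, if_neg hz0.not_gt, mul_inv, inv_I]

theorem exists_sqrt_of_mem_Icc_of_pos {Z1 Z2 : ℝ[X]} {S : Set ℝ} {a b ε : ℝ} (ha : 0 < a)
    (hZ1 : ∀ z : ℂ, aeval z Z1 = 0 → ∃ x ∈ S, z = x)
    (hZ2 : ∀ z : ℂ, aeval z Z2 = 0 → ∃ x ∈ Icc √a √b, z = x)
    (hε : sSup ((fun u : ℝ => |Z2.eval u / Z2.eval (-u)|) '' Icc √a √b) ≤ ε)
    {z : ℝ} (hz : z ∈ Icc a b) :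
    ∃ s : ℂ, s ^ 2 = z ∧ Fbranch z = s⁻¹ ∧ rotatedProduct Z1 Z2 (-s) ≠ 0 ∧
      ‖rotatedProduct Z1 Z2 s‖ ≤ ε * ‖rotatedProduct Z1 Z2 (-s)‖ := by
  have hz0 : 0 < z := ha.trans_le hz.1
  set u := √z
  have hu0 : 0 < u := Real.sqrt_pos.2 hz0
  have hu : u ∈ Icc √a √b := ⟨Real.sqrt_le_sqrt hz.1, Real.sqrt_le_sqrt hz.2⟩
  obtain ⟨hne, hle⟩ := norm_aeval_mul_aeval_conj_le (Real.sqrt_pos.2 ha) hZ2 hZ1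
    hε hu (w := I * u) (by simp [hu0.ne'])
  have hplus : rotatedProduct Z1 Z2 u = aeval (u : ℂ) Z2 * aeval (conj (I * u)) Z1 := by
    simp only [rotatedProduct, map_mul, conj_I, conj_ofReal, neg_mul, mul_comm]
  have hminus : rotatedProduct Z1 Z2 (-u) = aeval ((-u : ℝ) : ℂ) Z2 * aeval (I * u) Z1 := by
    simp only [rotatedProduct, mul_neg, neg_neg, ofReal_neg, mul_comm]
  refine ⟨u, ?_, ?_, by rwa [hminus], by rwa [hminus, hplus]⟩
  · rw [← ofReal_pow, Real.sq_sqrt hz0.le]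
  · rw [Fbranch, if_pos hz0]

theorem stmt5_general (a1 b1 a2 b2 : ℝ) (hb1 : b1 < 0) (ha2 : 0 < a2)
    (Z1 Z2 : Polynomial ℝ)
    (hZ1roots : ∀ z : ℂ, Polynomial.aeval z Z1 = 0 →
      ∃ x ∈ Set.Icc (Real.sqrt (-b1)) (Real.sqrt (-a1)), z = (x : ℂ))
    (hZ2roots : ∀ z : ℂ, Polynomial.aeval z Z2 = 0 →
      ∃ x ∈ Set.Icc (Real.sqrt a2) (Real.sqrt b2), z = (x : ℂ))
    (e1 e2 : ℝ)
    (he1 : e1 = sSup ((fun u : ℝ => |Z1.eval u / Z1.eval (-u)|) ''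
      Set.Icc (Real.sqrt (-b1)) (Real.sqrt (-a1))))
    (he2 : e2 = sSup ((fun u : ℝ => |Z2.eval u / Z2.eval (-u)|) ''
      Set.Icc (Real.sqrt a2) (Real.sqrt b2)))
    (P Q : Polynomial ℂ)
    (hsplit : ∀ s : ℂ,
      (Z1.map (algebraMap ℝ ℂ)).eval (-(Complex.I * s)) * (Z2.map (algebraMap ℝ ℂ)).eval s =
        -s * P.eval (s ^ 2) + Q.eval (s ^ 2))
    (hε : max e1 e2 < 1) :
    ∀ z ∈ Set.Icc a1 b1 ∪ Set.Icc a2 b2,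
      Q.eval (z : ℂ) ≠ 0 ∧
      ‖P.eval (z : ℂ) / (Q.eval (z : ℂ) * Fbranch z) - 1‖ ≤
        2 * max e1 e2 / (1 - max e1 e2) := by
  have hH : ∀ s, rotatedProduct Z1 Z2 s = -s * P.eval (s ^ 2) + Q.eval (s ^ 2) := by
    simpa only [rotatedProduct, eval_map_algebraMap] using hsplit
  intro z hz
  obtain ⟨s, hsz, hF, hne, hle⟩ : ∃ s : ℂ, s ^ 2 = z ∧ Fbranch z = s⁻¹ ∧
      rotatedProduct Z1 Z2 (-s) ≠ 0 ∧
      ‖rotatedProduct Z1 Z2 s‖ ≤ max e1 e2 * ‖rotatedProduct Z1 Z2 (-s)‖ := by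
    rcases hz with hz | hz
    · exact exists_sqrt_of_mem_Icc_of_neg hb1 hZ1roots hZ2roots (he1 ▸ le_max_left _ _) hz
    · exact exists_sqrt_of_mem_Icc_of_pos ha2 hZ1roots hZ2roots (he2 ▸ le_max_right _ _) hz
  rw [hF, ← hsz]
  exact eval_sq_ne_zero_and_norm_div_sub_one_le hH hε hne hle

theorem stmt5 (a1 b1 a2 b2 : ℝ) (hab1 : a1 < b1) (hb1 : b1 < 0) (ha2 : 0 < a2)
    (hab2 : a2 < b2) (n : ℕ) (hn : 1 ≤ n) (m1 m2 : ℕ) (hm1 : 0 < m1) (hm2 : 0 < m2)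
    (hm : m1 + m2 = 2 * n) (Z1 Z2 : Polynomial ℝ)
    (hZ1monic : Z1.Monic) (hZ1deg : Z1.natDegree = m1)
    (hZ1roots : ∀ z : ℂ, Polynomial.aeval z Z1 = 0 →
      ∃ x ∈ Set.Icc (Real.sqrt (-b1)) (Real.sqrt (-a1)), z = (x : ℂ))
    (hZ2monic : Z2.Monic) (hZ2deg : Z2.natDegree = m2)
    (hZ2roots : ∀ z : ℂ, Polynomial.aeval z Z2 = 0 →
      ∃ x ∈ Set.Icc (Real.sqrt a2) (Real.sqrt b2), z = (x : ℂ))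
    (e1 e2 : ℝ)
    (he1 : e1 = sSup ((fun u : ℝ => |Z1.eval u / Z1.eval (-u)|) ''
      Set.Icc (Real.sqrt (-b1)) (Real.sqrt (-a1))))
    (he2 : e2 = sSup ((fun u : ℝ => |Z2.eval u / Z2.eval (-u)|) ''
      Set.Icc (Real.sqrt a2) (Real.sqrt b2)))
    (P Q : Polynomial ℂ) (hPdeg : P.degree ≤ (n - 1 : ℕ)) (hQdeg : Q.degree ≤ (n : ℕ))
    (hsplit : ∀ s : ℂ,
      (Z1.map (algebraMap ℝ ℂ)).eval (-(Complex.I * s)) * (Z2.map (algebraMap ℝ ℂ)).eval s =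
        -s * P.eval (s ^ 2) + Q.eval (s ^ 2))
    (hε : max e1 e2 < 1) :
    ∀ z ∈ Set.Icc a1 b1 ∪ Set.Icc a2 b2,
      Q.eval (z : ℂ) ≠ 0 ∧
      ‖P.eval (z : ℂ) / (Q.eval (z : ℂ) * Fbranch z) - 1‖ ≤
        2 * max e1 e2 / (1 - max e1 e2) :=
  stmt5_general a1 b1 a2 b2 hb1 ha2 Z1 Z2 hZ1roots hZ2roots e1 e2 he1 he2 P Q hsplit hε
end

section
/- Let ρ1, ρ2 ∈ (0,1), let m > 0 be real, and let x1, x2 ≥ 0 be real numbers with x1 + x2 = m. Then, with ρ = exp( (log ρ1 · log ρ2)/(log ρ1 + log ρ2) ), one has max{ρ1^{x1}, ρ2^{x2}} ≥ ρ^m. -/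
theorem stmt11 (ρ1 ρ2 : ℝ) (hρ1 : ρ1 ∈ Set.Ioo (0 : ℝ) 1) (hρ2 : ρ2 ∈ Set.Ioo (0 : ℝ) 1)
    (m : ℝ) (hm : 0 < m) (x1 x2 : ℝ) (hx1 : 0 ≤ x1) (hx2 : 0 ≤ x2) (hsum : x1 + x2 = m)
    (ρ : ℝ) (hρ : ρ = Real.exp (Real.log ρ1 * Real.log ρ2 / (Real.log ρ1 + Real.log ρ2))) :
    ρ ^ m ≤ max (ρ1 ^ x1) (ρ2 ^ x2) := by
  obtain ⟨h1p, h1l⟩ := hρ1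
  obtain ⟨h2p, h2l⟩ := hρ2
  set l1 := Real.log ρ1 with hl1
  set l2 := Real.log ρ2 with hl2
  have L1 : l1 < 0 := Real.log_neg h1p h1l
  have L2 : l2 < 0 := Real.log_neg h2p h2l
  have hs : l1 + l2 < 0 := by linarith
  have hne : l1 + l2 ≠ 0 := ne_of_lt hs
  have e1 : ρ1 ^ x1 = Real.exp (l1 * x1) := by
    rw [Real.rpow_def_of_pos h1p]
  have e2 : ρ2 ^ x2 = Real.exp (l2 * x2) := by
    rw [Real.rpow_def_of_pos h2p]
  have e0 : ρ ^ m = Real.exp (l1 * l2 / (l1 + l2) * m) := by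
    rw [hρ, ← Real.exp_mul]
  rw [e0, e1, e2]
  rcases le_or_gt x1 (m * l2 / (l1 + l2)) with h | h
  · apply le_max_of_le_left
    apply Real.exp_le_exp.2
    have key : l1 * l2 / (l1 + l2) * m = l1 * (m * l2 / (l1 + l2)) := by ring
    rw [key]
    exact mul_le_mul_of_nonpos_left h L1.le
  · apply le_max_of_le_right
    apply Real.exp_le_exp.2
    have hx2' : x2 ≤ m * l1 / (l1 + l2) := by
      have hmeq : m * l1 / (l1 + l2) = m - m * l2 / (l1 + l2) := by
        field_simp
        ring
      rw [hmeq]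
      linarith
    have key : l1 * l2 / (l1 + l2) * m = l2 * (m * l1 / (l1 + l2)) := by ring
    rw [key]
    exact mul_le_mul_of_nonpos_left hx2' L2.le
end

section
/- Let n ≥ 1, let z, b ∈ ℂ, and let ĥ_0, …, ĥ_{n−1} and h_1, …, h_n be nonzero complex numbers. Define the finite continued fraction R_n(z) from the inside out by C_n = 1/h_n, C_j = 1/( h_j + 1/( ĥ_j·z + C_{j+1} ) ) for j = n−1, …, 1, and R_n(z) = 1/( ĥ_0·z + C_1 ), assuming every denominator appearing in this recursion is nonzero. If complex numbers u_0, u_1, …, u_n satisfy u_n = 0, (1/ĥ_0)·( (u_1 − u_0)/h_1 + b ) = z·u_0, and (1/ĥ_j)·( (u_{j+1} − u_j)/h_{j+1} − (u_j − u_{j−1})/h_j ) = z·u_j for j = 1, …, n−1, then u_0 = R_n(z)·b. -/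
/-!
Write `w j = (u j - u (j - 1)) / h j` for the discrete flux. Sweeping down from the Dirichlet
condition `u n = 0`, every flux is a multiple of the value on its left, `w j = -C j * u (j - 1)`:
the difference equation at `j` turns `w (j + 1) = -C (j + 1) * u j` into
`w j = -(hd j * z + C (j + 1)) * u j`, and eliminating `u j` through `u (j - 1) = u j - h j * w j`
produces exactly one more level of the continued fraction. At `j = 0` the Neumann equation then
reads `b = (hd 0 * z + C 1) * u 0`.
-/

theorem sub_div_eq_neg_one_div_add_one_div_mul {K : Type*} [Field K] {a D x y : K}
    (ha : a ≠ 0) (hD : D ≠ 0) (haD : a + 1 / D ≠ 0) (hxy : (x - y) / a = -(D * x)) :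
    (x - y) / a = -(1 / (a + 1 / D) * y) := by
  have hy : y = (a + 1 / D) * (D * x) := by
    field_simp at hxy ⊢
    linear_combination -hxy
  rw [hxy, hy, ← mul_assoc, one_div_mul_cancel haD, one_mul]

theorem flux_eq_neg_mul_of_continuedFraction {K : Type*} [Field K] (n : ℕ) (z : K)
    (h hd C u : ℕ → K) (hh : ∀ j, 1 ≤ j → j ≤ n → h j ≠ 0) (hhd : ∀ j, j < n → hd j ≠ 0)
    (hCn : C n = 1 / h n)
    (hCdenom1 : ∀ j, 1 ≤ j → j < n → hd j * z + C (j + 1) ≠ 0)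
    (hCdenom2 : ∀ j, 1 ≤ j → j < n → h j + 1 / (hd j * z + C (j + 1)) ≠ 0)
    (hC : ∀ j, 1 ≤ j → j < n → C j = 1 / (h j + 1 / (hd j * z + C (j + 1))))
    (hun : u n = 0)
    (huj : ∀ j, 1 ≤ j → j ≤ n - 1 →
      (1 / hd j) * ((u (j + 1) - u j) / h (j + 1) - (u j - u (j - 1)) / h j) = z * u j)
    {j : ℕ} (hj : 1 ≤ j) (hjn : j ≤ n) :
    (u j - u (j - 1)) / h j = -(C j * u (j - 1)) := by
  refine Nat.decreasingInduction' (P := fun k => (u k - u (k - 1)) / h k = -(C k * u (k - 1)))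
    (fun k hkn hjk ih => ?_) hjn (by rw [hun, hCn]; ring)
  have hk : 1 ≤ k := hj.trans hjk
  rw [Nat.add_sub_cancel] at ih
  have hflux : (u k - u (k - 1)) / h k = -((hd k * z + C (k + 1)) * u k) := by
    have hdiff := huj k hk (by omega)
    rw [ih] at hdiff
    field_simp [hhd k hkn] at hdiff
    linear_combination -hdiff
  rw [hC k hk hkn]
  exact sub_div_eq_neg_one_div_add_one_div_mul (hh k hk hkn.le) (hCdenom1 k hk hkn)
    (hCdenom2 k hk hkn) hflux

theorem stmt14 (n : ℕ) (hn : 1 ≤ n) (z b : ℂ) (h hd : ℕ → ℂ)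
    -- primal steps `h 1, …, h n` and dual steps `hd 0, …, hd (n-1)` are nonzero
    (hh : ∀ j, 1 ≤ j → j ≤ n → h j ≠ 0) (hhd : ∀ j, j < n → hd j ≠ 0)
    -- the inside-out continued fraction recursion `C n, C (n-1), …, C 1`
    (C : ℕ → ℂ) (hCn : C n = 1 / h n)
    (hCdenom1 : ∀ j, 1 ≤ j → j < n → hd j * z + C (j + 1) ≠ 0)
    (hCdenom2 : ∀ j, 1 ≤ j → j < n → h j + 1 / (hd j * z + C (j + 1)) ≠ 0)
    (hC : ∀ j, 1 ≤ j → j < n → C j = 1 / (h j + 1 / (hd j * z + C (j + 1))))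
    (hCdenom0 : hd 0 * z + C 1 ≠ 0)
    -- the finite difference solution
    (u : ℕ → ℂ) (hun : u n = 0)
    (hu0 : (1 / hd 0) * ((u 1 - u 0) / h 1 + b) = z * u 0)
    (huj : ∀ j, 1 ≤ j → j ≤ n - 1 →
      (1 / hd j) * ((u (j + 1) - u j) / h (j + 1) - (u j - u (j - 1)) / h j) = z * u j) :
    u 0 = (1 / (hd 0 * z + C 1)) * b := by
  have hflux1 : (u 1 - u 0) / h 1 = -(C 1 * u 0) :=
    flux_eq_neg_mul_of_continuedFraction n z h hd C u hh hhd hCn hCdenom1 hCdenom2 hC hun huj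
      le_rfl hn
  rw [hflux1] at hu0
  field_simp [hhd 0 hn] at hu0 ⊢
  linear_combination -hu0
end

section
/- Let h > 0 be real, let z, b, u_0, λ ∈ ℂ with λ² − (2 + h²·z)·λ + 1 = 0 and |λ| < 1, and define u_j = u_0·λ^j for j = 0, 1, 2, …. Then: (i) (1/h)·( (u_{j+1} − u_j)/h − (u_j − u_{j−1})/h ) = z·u_j for every j ≥ 1; (ii) u_j → 0 as j → ∞; and (iii) if in addition (1/(h/2))·( (u_1 − u_0)/h + b ) = z·u_0, then ( z + (h·z/2)² )·u_0² = b². (Thus u_0 equals the discrete impedance F_h(z) = 1/√(z + (hz/2)²) applied to b, up to the choice of square-root branch.) -/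
/-! With `μ = (λ - 1) / h` the characteristic equation reads `μ² = z (1 + h μ)`, and the
boundary condition on the half cell reads `b = u₀ (h z / 2 - μ)`; squaring the latter and
substituting the former gives `b² = (z + (h z / 2)²) u₀²`. -/

section

variable {K : Type*} [Field K] {h z lam : K}

theorem second_difference_geometric_eq (hh : h ≠ 0)
    (hlam : lam ^ 2 - (2 + h ^ 2 * z) * lam + 1 = 0) (u0 : K) (j : ℕ) :
    1 / h * ((u0 * lam ^ (j + 2) - u0 * lam ^ (j + 1)) / h
      - (u0 * lam ^ (j + 1) - u0 * lam ^ j) / h) = z * (u0 * lam ^ (j + 1)) := by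
  field_simp
  linear_combination (u0 * lam ^ j) * hlam

theorem sq_div_sub_one_eq_of_char_eq (hh : h ≠ 0)
    (hlam : lam ^ 2 - (2 + h ^ 2 * z) * lam + 1 = 0) :
    ((lam - 1) / h) ^ 2 = z * (1 + h * ((lam - 1) / h)) := by
  field_simp
  linear_combination hlam

theorem sq_eq_of_neumann_boundary [CharZero K] (hh : h ≠ 0)
    (hlam : lam ^ 2 - (2 + h ^ 2 * z) * lam + 1 = 0) {u0 b : K}
    (hbd : 1 / (h / 2) * ((u0 * lam - u0) / h + b) = z * u0) :
    (z + (h * z / 2) ^ 2) * u0 ^ 2 = b ^ 2 := by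
  have hb : b = u0 * (h * z / 2 - (lam - 1) / h) := by
    field_simp at hbd ⊢
    linear_combination hbd
  have hchar := sq_div_sub_one_eq_of_char_eq hh hlam
  generalize (lam - 1) / h = μ at hb hchar
  rw [hb]
  linear_combination (-u0 ^ 2) * hchar

end

theorem stmt16 (h : ℝ) (hh : 0 < h) (z b u0 lam : ℂ)
    (hlam : lam ^ 2 - (2 + (h : ℂ) ^ 2 * z) * lam + 1 = 0) (hlam1 : ‖lam‖ < 1)
    (u : ℕ → ℂ) (hu : ∀ j, u j = u0 * lam ^ j) :
    (∀ j, 1 ≤ j →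
      (1 / (h : ℂ)) * ((u (j + 1) - u j) / h - (u j - u (j - 1)) / h) = z * u j) ∧
    Filter.Tendsto u Filter.atTop (nhds 0) ∧
    ((1 / ((h : ℂ) / 2)) * ((u 1 - u 0) / h + b) = z * u 0 →
      (z + ((h : ℂ) * z / 2) ^ 2) * u 0 ^ 2 = b ^ 2) := by
  have hh' : (h : ℂ) ≠ 0 := by exact_mod_cast hh.ne'
  obtain rfl : u = fun j ↦ u0 * lam ^ j := funext hu
  refine ⟨?_, ?_, ?_⟩
  · rintro j hj
    obtain ⟨k, rfl⟩ := Nat.exists_eq_add_of_le' hj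
    exact second_difference_geometric_eq hh' hlam u0 k
  · simpa using (tendsto_pow_atTop_nhds_zero_of_norm_lt_one hlam1).const_mul u0
  · intro hbd
    simp only [pow_zero, pow_one, mul_one] at hbd ⊢
    exact sq_eq_of_neumann_boundary hh' hlam hbd
end

section
/- Let A be an N×N Hermitian positive definite complex matrix, let S be its positive definite square root (so S is Hermitian positive definite and S² = A), and let b ∈ ℂ^N. Define u(x) = exp(−x·S)·S^{−1}·b for x ∈ ℝ. Then: (i) u is twice differentiable with u''(x) = A·u(x) for all x; (ii) u'(0) = −b; and (iii) u(x) → 0 as x → +∞. In particular u(0) = S^{−1}·b = A^{−1/2}·b, so the Neumann data −b at x = 0 is mapped to the Dirichlet data A^{−1/2}·b. -/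
/-!
Differentiating `x ↦ exp (-x • S)` gives `u' x = -exp (-x • S) *ᵥ b`, and since `S` commutes with
`exp (-x • S)`, `u'' x = exp (-x • S) *ᵥ (S *ᵥ b) = (S * S) *ᵥ u x = A *ᵥ u x`. For the decay,
the spectral theorem writes `exp (-x • S) = U * diagonal (exp (-x μᵢ)) * U⁻¹` with all
eigenvalues `μᵢ > 0`.
-/

open NormedSpace Matrix Filter Topology ComplexOrder

namespace Matrix

variable {n : Type*} [Fintype n] [DecidableEq n]

section

attribute [local instance] Matrix.linftyOpNormedRing Matrix.linftyOpNormedAlgebra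

theorem hasDerivAt_exp_neg_smul_mulVec (S : Matrix n n ℂ) (w : n → ℂ) (x : ℝ) :
    HasDerivAt (fun t : ℝ => exp (-((t : ℂ) • S)) *ᵥ w)
      (-(exp (-((x : ℂ) • S)) *ᵥ (S *ᵥ w))) x := by
  have hexp : HasDerivAt (fun t : ℝ => exp (-((t : ℂ) • S))) (exp (-((x : ℂ) • S)) * -S) x := by
    simp only [Complex.coe_smul, ← smul_neg]
    exact hasDerivAt_exp_smul_const (-S) x
  have h := (LinearMap.toContinuousLinearMap ((mulVecBilin ℝ ℝ).flip w)).hasFDerivAt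
    |>.comp_hasDerivAt x hexp
  rw [mulVec_mulVec, ← neg_mulVec, ← mul_neg]
  exact h

end

theorem IsHermitian.exp_neg_smul_eq {S : Matrix n n ℂ} (hS : S.IsHermitian) (x : ℝ) :
    NormedSpace.exp (-((x : ℂ) • S)) = (hS.eigenvectorUnitary : Matrix n n ℂ) *
      diagonal (fun i => ((Real.exp (-(x * hS.eigenvalues i)) : ℝ) : ℂ)) *
      (hS.eigenvectorUnitary : Matrix n n ℂ)⁻¹ := by
  have hdiag : diagonal (fun i => ((-(x * hS.eigenvalues i) : ℝ) : ℂ)) =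
      -((x : ℂ) • diagonal (RCLike.ofReal ∘ hS.eigenvalues)) := by
    rw [← diagonal_smul]
    ext i j
    rcases eq_or_ne i j with rfl | hij <;> simp [*]
  have hconj : -((x : ℂ) • S) = (hS.eigenvectorUnitary : Matrix n n ℂ) *
      diagonal (fun i => ((-(x * hS.eigenvalues i) : ℝ) : ℂ)) *
      (hS.eigenvectorUnitary : Matrix n n ℂ)⁻¹ := by
    conv_lhs => rw [hS.spectral_theorem, Unitary.conjStarAlgAut_apply]
    rw [Matrix.inv_eq_left_inv (Unitary.coe_star_mul_self hS.eigenvectorUnitary), hdiag,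
      mul_neg, neg_mul, mul_smul_comm, smul_mul_assoc]
  rw [hconj, exp_conj _ _ Unitary.isUnit_coe, exp_diagonal]
  congr 3
  ext i
  simp [Complex.ofReal_exp, Complex.exp_eq_exp_ℂ]

theorem PosDef.tendsto_exp_neg_smul_atTop {S : Matrix n n ℂ} (hS : S.PosDef) :
    Tendsto (fun x : ℝ => NormedSpace.exp (-((x : ℂ) • S))) atTop (𝓝 0) := by
  have hentry (i : n) : Tendsto (fun x : ℝ => ((Real.exp (-(x * hS.1.eigenvalues i)) : ℝ) : ℂ))
      atTop (𝓝 0) := by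
    have h := Real.tendsto_exp_atBot.comp
      (tendsto_neg_atTop_atBot.comp (tendsto_id.atTop_mul_const (hS.eigenvalues_pos i)))
    simpa only [Complex.ofReal_zero, Function.comp_def, id] using
      (Complex.continuous_ofReal.tendsto 0).comp h
  have hdiag := (continuous_id.matrix_diagonal.tendsto 0).comp (tendsto_pi_nhds.2 hentry)
  simp_rw [hS.1.exp_neg_smul_eq]
  simpa using (tendsto_const_nhds.mul hdiag).mul tendsto_const_nhds

end Matrix

open NormedSpace in
theorem stmt19_general (N : ℕ) (A S : Matrix (Fin N) (Fin N) ℂ)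
    (hS : S.PosDef) (hS2 : S * S = A) (b : Fin N → ℂ) :
    ∃ u' : ℝ → Fin N → ℂ,
      (∀ x : ℝ, HasDerivAt
        (fun x : ℝ => (exp (-((x : ℂ) • S)) * S⁻¹).mulVec b) (u' x) x) ∧
      (∀ x : ℝ, HasDerivAt u'
        (A.mulVec ((exp (-((x : ℂ) • S)) * S⁻¹).mulVec b)) x) ∧
      u' 0 = -b ∧
      Filter.Tendsto (fun x : ℝ => (exp (-((x : ℂ) • S)) * S⁻¹).mulVec b)
        Filter.atTop (nhds 0) ∧
      (exp (-(((0 : ℝ) : ℂ) • S)) * S⁻¹).mulVec b = S⁻¹.mulVec b := by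
  have hSinv : S * S⁻¹ = 1 := mul_nonsing_inv S ((isUnit_iff_isUnit_det S).mp hS.isUnit)
  refine ⟨fun x => -(exp (-((x : ℂ) • S)) *ᵥ b), fun x => ?_, fun x => ?_, by simp, ?_, by simp⟩
  · have h := hasDerivAt_exp_neg_smul_mulVec S (S⁻¹ *ᵥ b) x
    rw [mulVec_mulVec b S, hSinv, one_mulVec] at h
    simpa only [mulVec_mulVec] using h
  · have hcomm : Commute S (exp (-((x : ℂ) • S))) :=
      (((Commute.refl S).smul_right _).neg_right).exp_right
    have hA : A * (exp (-((x : ℂ) • S)) * S⁻¹) = exp (-((x : ℂ) • S)) * S := by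
      calc A * (exp (-((x : ℂ) • S)) * S⁻¹) = S * (S * exp (-((x : ℂ) • S))) * S⁻¹ := by
            simp only [← hS2, mul_assoc]
        _ = exp (-((x : ℂ) • S)) * S := by
            rw [hcomm.eq, mul_assoc, mul_assoc, hSinv, mul_one, hcomm.eq]
    have h := (hasDerivAt_exp_neg_smul_mulVec S b x).neg
    rw [neg_neg, mulVec_mulVec] at h
    rwa [mulVec_mulVec, hA]
  · have hcont : Continuous fun M : Matrix (Fin N) (Fin N) ℂ => (M * S⁻¹) *ᵥ b :=
      (continuous_id.matrix_mul continuous_const).matrix_mulVec continuous_const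
    simpa only [Function.comp_def, zero_mul, zero_mulVec] using
      (hcont.tendsto 0).comp hS.tendsto_exp_neg_smul_atTop

open NormedSpace in
theorem stmt19 (N : ℕ) (A S : Matrix (Fin N) (Fin N) ℂ)
    (hA : A.PosDef) (hS : S.PosDef) (hS2 : S * S = A) (b : Fin N → ℂ) :
    ∃ u' : ℝ → Fin N → ℂ,
      (∀ x : ℝ, HasDerivAt
        (fun x : ℝ => (exp (-((x : ℂ) • S)) * S⁻¹).mulVec b) (u' x) x) ∧
      (∀ x : ℝ, HasDerivAt u'
        (A.mulVec ((exp (-((x : ℂ) • S)) * S⁻¹).mulVec b)) x) ∧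
      u' 0 = -b ∧
      Filter.Tendsto (fun x : ℝ => (exp (-((x : ℂ) • S)) * S⁻¹).mulVec b)
        Filter.atTop (nhds 0) ∧
      (exp (-(((0 : ℝ) : ℂ) • S)) * S⁻¹).mulVec b = S⁻¹.mulVec b :=
  stmt19_general N A S hS hS2 b
end
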